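/- arXiv:2104.04747 — 3 statements merged into one kernel-verified Lean document; each statement's English description precedes it below -/
import Mathlib

section
/- Let U be a real Hilbert space, A : U → U a bounded self-adjoint positive operator, and b ∈ U. Suppose there exists u* ∈ U with A u* + b = 0. Write u* = u + v with u ∈ ker A and v ∈ closure(range A). Then as ε → 0+, the elements u*_ε := -(A + εI)^{-1} b converge strongly to v, and A v + b = 0. -/
/-!
Positivity of `A` gives `ε ‖x‖ ≤ ‖(A + ε) x‖`, so the operators `ε (A + ε)⁻¹` have norm at most `1`.
On `range A` they tend to `0` as `ε → 0+`, because `ε (A + ε)⁻¹ A z = ε z - ε² (A + ε)⁻¹ z`;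
being uniformly bounded, they then tend to `0` on `closure (range A)` as well. Since `A v = -b`,
`-(A + ε)⁻¹ b = (A + ε)⁻¹ A v = v - ε (A + ε)⁻¹ v → v`.
-/

open Filter Topology
open scoped RealInnerProductSpace

theorem tendsto_zero_of_mem_closure_of_eventually_opNorm_le {ι 𝕜 E F : Type*}
    [NontriviallyNormedField 𝕜] [SeminormedAddCommGroup E] [NormedSpace 𝕜 E]
    [SeminormedAddCommGroup F] [NormedSpace 𝕜 F] {l : Filter ι} {S : ι → E →L[𝕜] F} {C : ℝ}
    (hS : ∀ᶠ i in l, ‖S i‖ ≤ C) {s : Set E} (hs : ∀ y ∈ s, Tendsto (S · y) l (𝓝 0))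
    {x : E} (hx : x ∈ closure s) : Tendsto (S · x) l (𝓝 0) := by
  let S' : {i // ‖S i‖ ≤ C} → E →L[𝕜] F := fun i ↦ S i
  have hequi : Equicontinuous ((↑) ∘ S') :=
    ((NormedSpace.equicontinuous_TFAE S').out 5 1).mp (⟨C, fun i ↦ i.2⟩ : ∃ C, ∀ i, ‖S' i‖ ≤ C)
  have hrange : Set.range ((↑) : {i // ‖S i‖ ≤ C} → ι) ∈ l := by
    rwa [Subtype.range_coe_subtype]
  rw [← tendsto_comap'_iff hrange]
  exact (hequi x).tendsto_of_mem_closure tendsto_const_nhds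
    (fun y hy ↦ (tendsto_comap'_iff hrange).2 (hs y hy)) hx

section PositiveOperator

variable {U : Type*} [NormedAddCommGroup U] [InnerProductSpace ℝ U] {A : U →L[ℝ] U}

theorem mul_norm_le_norm_add_smul (hpos : ∀ u : U, 0 ≤ ⟪A u, u⟫) (ε : ℝ) (x : U) :
    ε * ‖x‖ ≤ ‖A x + ε • x‖ := by
  rcases (norm_nonneg x).eq_or_lt with hx | hx
  · rw [← hx, mul_zero]; exact norm_nonneg _
  refine le_of_mul_le_mul_right ?_ hx
  calc ε * ‖x‖ * ‖x‖ ≤ ⟪A x + ε • x, x⟫ := by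
        rw [inner_add_left, real_inner_smul_left, real_inner_self_eq_norm_mul_norm]
        linarith [hpos x]
    _ ≤ ‖A x + ε • x‖ * ‖x‖ := real_inner_le_norm _ _

variable {R : U →L[ℝ] U} {ε : ℝ}

theorem opNorm_smul_le_one_of_comp_eq_id (hpos : ∀ u : U, 0 ≤ ⟪A u, u⟫) (hε : 0 ≤ ε)
    (hR : (A + ε • ContinuousLinearMap.id ℝ U).comp R = ContinuousLinearMap.id ℝ U) :
    ‖ε • R‖ ≤ 1 := by
  refine (ε • R).opNorm_le_bound zero_le_one fun x ↦ ?_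
  have hx : A (R x) + ε • R x = x := by simpa using congr($hR x)
  rw [smul_apply, norm_smul, Real.norm_of_nonneg hε, one_mul]
  simpa [hx] using mul_norm_le_norm_add_smul hpos ε (R x)

theorem apply_map_eq_sub_smul_of_comp_eq_id
    (hR : R.comp (A + ε • ContinuousLinearMap.id ℝ U) = ContinuousLinearMap.id ℝ U) (z : U) :
    R (A z) = z - ε • R z :=
  eq_sub_of_add_eq (by simpa using congr($hR z))

theorem norm_smul_apply_map_le (hpos : ∀ u : U, 0 ≤ ⟪A u, u⟫) (hε : 0 ≤ ε)
    (hRA : (A + ε • ContinuousLinearMap.id ℝ U).comp R = ContinuousLinearMap.id ℝ U)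
    (hAR : R.comp (A + ε • ContinuousLinearMap.id ℝ U) = ContinuousLinearMap.id ℝ U) (z : U) :
    ‖ε • R (A z)‖ ≤ 2 * ε * ‖z‖ := by
  have hRz : ‖ε • R z‖ ≤ ‖z‖ :=
    ((ε • R).le_opNorm z).trans (mul_le_of_le_one_left (norm_nonneg z)
      (opNorm_smul_le_one_of_comp_eq_id hpos hε hRA))
  calc ‖ε • R (A z)‖ = ε * ‖z - ε • R z‖ := by
        rw [apply_map_eq_sub_smul_of_comp_eq_id hAR, norm_smul, Real.norm_of_nonneg hε]
    _ ≤ ε * (‖z‖ + ‖z‖) := by gcongr; exact (norm_sub_le _ _).trans (by gcongr)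
    _ = 2 * ε * ‖z‖ := by ring

theorem tendsto_smul_apply_of_mem_closure_range (hpos : ∀ u : U, 0 ≤ ⟪A u, u⟫)
    {T : ℝ → U →L[ℝ] U}
    (hT : ∀ ε > (0 : ℝ),
      (A + ε • ContinuousLinearMap.id ℝ U).comp (T ε) = ContinuousLinearMap.id ℝ U ∧
      (T ε).comp (A + ε • ContinuousLinearMap.id ℝ U) = ContinuousLinearMap.id ℝ U)
    {v : U} (hv : v ∈ closure (Set.range A)) :
    Tendsto (fun ε : ℝ ↦ ε • T ε v) (𝓝[>] 0) (𝓝 0) := by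
  have hbound : ∀ᶠ ε in 𝓝[>] (0 : ℝ), ‖ε • T ε‖ ≤ 1 :=
    eventually_nhdsWithin_of_forall fun ε hε ↦
      opNorm_smul_le_one_of_comp_eq_id hpos hε.le (hT ε hε).1
  refine tendsto_zero_of_mem_closure_of_eventually_opNorm_le hbound ?_ hv
  rintro _ ⟨z, rfl⟩
  have hle : ∀ᶠ ε in 𝓝[>] (0 : ℝ), ‖ε • T ε (A z)‖ ≤ 2 * ε * ‖z‖ :=
    eventually_nhdsWithin_of_forall fun ε hε ↦
      norm_smul_apply_map_le hpos hε.le (hT ε hε).1 (hT ε hε).2 z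
  have hlim : Tendsto (fun ε : ℝ ↦ 2 * ε * ‖z‖) (𝓝[>] 0) (𝓝 0) :=
    tendsto_nhdsWithin_of_tendsto_nhds <|
      Continuous.tendsto' (f := fun ε : ℝ ↦ 2 * ε * ‖z‖) (by fun_prop) 0 0 (by simp)
  exact squeeze_zero_norm' hle hlim

end PositiveOperator

theorem stmt_3_general {U : Type*} [NormedAddCommGroup U] [InnerProductSpace ℝ U]
    (A : U →L[ℝ] U) (hpos : ∀ u : U, 0 ≤ ⟪A u, u⟫)
    (b ustar u v : U)
    (hsol : A ustar + b = 0) (hu : A u = 0) (hv : v ∈ closure (Set.range A))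
    (hdecomp : ustar = u + v)
    (T : ℝ → U →L[ℝ] U)
    (hT : ∀ ε > (0 : ℝ),
      (A + ε • ContinuousLinearMap.id ℝ U).comp (T ε) = ContinuousLinearMap.id ℝ U ∧
      (T ε).comp (A + ε • ContinuousLinearMap.id ℝ U) = ContinuousLinearMap.id ℝ U) :
    Filter.Tendsto (fun ε : ℝ => -(T ε b)) (nhdsWithin 0 (Set.Ioi 0)) (nhds v) ∧
      A v + b = 0 := by
  have hAv : A v + b = 0 := by rwa [hdecomp, map_add, hu, zero_add] at hsol
  refine ⟨?_, hAv⟩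
  have hres : ∀ ε ∈ Set.Ioi (0 : ℝ), v - ε • T ε v = -(T ε b) := fun ε hε ↦ by
    rw [← apply_map_eq_sub_smul_of_comp_eq_id (hT ε hε).2, eq_neg_of_add_eq_zero_left hAv, map_neg]
  simpa using (tendsto_const_nhds.sub (tendsto_smul_apply_of_mem_closure_range hpos hT hv)).congr'
    (eventually_nhdsWithin_of_forall hres)

theorem stmt_3 {U : Type*} [NormedAddCommGroup U] [InnerProductSpace ℝ U] [CompleteSpace U]
    (A : U →L[ℝ] U) (hA : IsSelfAdjoint A) (hpos : ∀ u : U, 0 ≤ ⟪A u, u⟫)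
    (b ustar u v : U)
    (hsol : A ustar + b = 0) (hu : A u = 0) (hv : v ∈ closure (Set.range A))
    (hdecomp : ustar = u + v)
    (T : ℝ → U →L[ℝ] U)
    (hT : ∀ ε > (0 : ℝ),
      (A + ε • ContinuousLinearMap.id ℝ U).comp (T ε) = ContinuousLinearMap.id ℝ U ∧
      (T ε).comp (A + ε • ContinuousLinearMap.id ℝ U) = ContinuousLinearMap.id ℝ U) :
    Filter.Tendsto (fun ε : ℝ => -(T ε b)) (nhdsWithin 0 (Set.Ioi 0)) (nhds v) ∧
      A v + b = 0 :=
  stmt_3_general A hpos b ustar u v hsol hu hv hdecomp T hT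
end

section
/- Let U be a real Hilbert space, A : U → U bounded self-adjoint positive, and b ∈ U. If the family {u*_ε := -(A+εI)^{-1} b}_{ε>0} is bounded in U, then there exists u* ∈ U with A u* + b = 0; in fact any weak limit point of u*_{ε_n} along a sequence ε_n → 0 satisfies this equation. -/
/-!
Write `u ε := -(A + ε)⁻¹ b`, so that `A u ε + ε u ε = -b`. Testing `A u ε + b = -ε u ε` against a
fixed `y` and using the symmetry of `A` shows that every weak limit `w` of `u εₙ` with `εₙ → 0`
satisfies `⟪A w + b, y⟫ = 0` for all `y`.

For existence, positivity of `A` gives, for `0 ≤ ε < δ`,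
`‖u ε - u δ‖² ≤ ‖u ε‖² - ‖u δ‖²`. Hence `‖u ε‖²` increases as `ε ↓ 0`, it is bounded, so it converges,
and the inequality makes `u (1 / (n + 1))` a Cauchy sequence; its strong limit is in particular a
weak limit.
-/

open Filter Topology
open scoped RealInnerProductSpace

theorem cauchySeq_of_norm_sub_sq_le {E : Type*} [SeminormedAddCommGroup E] {s : ℕ → E} {M : ℝ}
    (hM : ∀ n, ‖s n‖ ≤ M) (hs : ∀ n m, n < m → ‖s m - s n‖ ^ 2 ≤ ‖s m‖ ^ 2 - ‖s n‖ ^ 2) :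
    CauchySeq s := by
  have hs' : ∀ n m, n ≤ m → ‖s m - s n‖ ^ 2 ≤ ‖s m‖ ^ 2 - ‖s n‖ ^ 2 := by
    intro n m hnm
    rcases hnm.eq_or_lt with rfl | hlt
    · simp
    · exact hs n m hlt
  set G : ℕ → ℝ := fun n => ‖s n‖ ^ 2
  have hG_mono : Monotone G := fun n m hnm => by
    have := hs' n m hnm
    simp only [G]
    nlinarith [sq_nonneg ‖s m - s n‖]
  have hG_bdd : BddAbove (Set.range G) :=
    ⟨M ^ 2, by
      rintro _ ⟨n, rfl⟩
      exact pow_le_pow_left₀ (norm_nonneg _) (hM n) 2⟩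
  have hG_cauchy : CauchySeq G := (tendsto_atTop_ciSup hG_mono hG_bdd).cauchySeq
  rw [Metric.cauchySeq_iff']
  intro r hr
  obtain ⟨N, hN⟩ := Metric.cauchySeq_iff'.mp hG_cauchy (r ^ 2) (by positivity)
  refine ⟨N, fun n hn => ?_⟩
  have hsq : ‖s n - s N‖ ^ 2 < r ^ 2 :=
    calc ‖s n - s N‖ ^ 2 ≤ G n - G N := hs' N n hn
      _ ≤ |G n - G N| := le_abs_self _
      _ < r ^ 2 := by simpa only [Real.dist_eq] using hN n hn
  rw [dist_eq_norm]
  exact lt_of_pow_lt_pow_left₀ 2 hr.le hsq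

section Regularization

variable {U : Type*} [NormedAddCommGroup U] [InnerProductSpace ℝ U] {A : U →L[ℝ] U} {b : U}

theorem norm_sub_sq_le_of_apply_add_smul_eq (hpos : ∀ u : U, 0 ≤ ⟪A u, u⟫) {x y : U} {ε δ : ℝ}
    (hε : 0 ≤ ε) (hεδ : ε < δ) (h : A x + ε • x = A y + δ • y) :
    ‖x - y‖ ^ 2 ≤ ‖x‖ ^ 2 - ‖y‖ ^ 2 := by
  have hA : A (x - y) = δ • y - ε • x := by
    rw [map_sub]
    linear_combination (norm := abel) h
  have key : 0 ≤ (δ - ε) * ⟪y, x - y⟫ - ε * ‖x - y‖ ^ 2 := by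
    have := hpos (x - y)
    rw [hA] at this
    convert this using 1
    simp only [inner_sub_left, inner_sub_right, real_inner_smul_left, real_inner_self_eq_norm_sq,
      norm_sub_sq_real, real_inner_comm x y]
    ring
  have hy : 0 ≤ ⟪y, x - y⟫ := by
    by_contra! hneg
    nlinarith [sq_nonneg ‖x - y‖]
  have hexpand : ‖x‖ ^ 2 - ‖y‖ ^ 2 = ‖x - y‖ ^ 2 + 2 * ⟪y, x - y⟫ := by
    rw [norm_sub_sq_real, inner_sub_right, real_inner_self_eq_norm_sq, real_inner_comm x y]
    ring
  linarith

theorem apply_add_eq_zero_of_forall_tendsto_inner [CompleteSpace U] (hA : IsSelfAdjoint A)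
    {ι : Type*} {l : Filter ι} [l.NeBot] {u : ι → U} {ε : ι → ℝ} {w : U}
    (hu : ∀ k, A (u k) + ε k • u k = -b) (hε : Tendsto ε l (𝓝 0))
    (hw : ∀ y, Tendsto (fun k => ⟪u k, y⟫) l (𝓝 ⟪w, y⟫)) :
    A w + b = 0 := by
  refine ext_inner_right ℝ fun y => ?_
  have hsymm : ∀ v, ⟪A v + b, y⟫ = ⟪v, A y⟫ + ⟪b, y⟫ := fun v => by
    rw [inner_add_left]
    exact congrArg (· + ⟪b, y⟫) (hA.isSymmetric v y)
  have hlim : Tendsto (fun k => ⟪A (u k) + b, y⟫) l (𝓝 ⟪A w + b, y⟫) := by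
    simpa only [hsymm] using (hw (A y)).add_const ⟪b, y⟫
  have hzero : Tendsto (fun k => ⟪A (u k) + b, y⟫) l (𝓝 0) := by
    have hres : ∀ k, ⟪A (u k) + b, y⟫ = -(ε k * ⟪u k, y⟫) := fun k => by
      have : A (u k) + b = -(ε k • u k) := by linear_combination (norm := abel) hu k
      rw [this, inner_neg_left, real_inner_smul_left]
    simpa only [hres, zero_mul, neg_zero] using ((hε.mul (hw y)).neg)
  rw [tendsto_nhds_unique hlim hzero, inner_zero_left]

end Regularization

theorem stmt_4 {U : Type*} [NormedAddCommGroup U] [InnerProductSpace ℝ U] [CompleteSpace U]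
    (A : U →L[ℝ] U) (hA : IsSelfAdjoint A) (hpos : ∀ u : U, 0 ≤ ⟪A u, u⟫)
    (b : U) (T : ℝ → U →L[ℝ] U)
    (hT : ∀ ε > (0 : ℝ),
      (A + ε • ContinuousLinearMap.id ℝ U).comp (T ε) = ContinuousLinearMap.id ℝ U ∧
      (T ε).comp (A + ε • ContinuousLinearMap.id ℝ U) = ContinuousLinearMap.id ℝ U)
    (M : ℝ) (hbdd : ∀ ε > (0 : ℝ), ‖-(T ε b)‖ ≤ M) :
    (∃ ustar : U, A ustar + b = 0) ∧
    ∀ εn : ℕ → ℝ, (∀ k, 0 < εn k) → Filter.Tendsto εn Filter.atTop (nhds 0) →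
      ∀ w : U,
        (∀ y : U, Filter.Tendsto (fun k => ⟪-(T (εn k) b), y⟫) Filter.atTop (nhds ⟪w, y⟫)) →
        A w + b = 0 := by
  set u : ℝ → U := fun ε => -(T ε b)
  have hu : ∀ ε > (0 : ℝ), A (u ε) + ε • u ε = -b := fun ε hε => by
    have := DFunLike.congr_fun (hT ε hε).1 b
    simp only [ContinuousLinearMap.comp_apply, add_apply, smul_apply,
      ContinuousLinearMap.id_apply] at this
    simp only [u, map_neg, smul_neg, ← neg_add, this]
  have hweak : ∀ εn : ℕ → ℝ, (∀ k, 0 < εn k) → Tendsto εn atTop (𝓝 0) → ∀ w : U,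
      (∀ y, Tendsto (fun k => ⟪u (εn k), y⟫) atTop (𝓝 ⟪w, y⟫)) → A w + b = 0 :=
    fun εn hεn hεn0 _ hw =>
      apply_add_eq_zero_of_forall_tendsto_inner hA (fun k => hu _ (hεn k)) hεn0 hw
  refine ⟨?_, hweak⟩
  set e : ℕ → ℝ := fun n => 1 / (n + 1)
  have he_pos : ∀ n, 0 < e n := fun n => by positivity
  have he_anti : StrictAnti e := fun n m hnm => by
    simp only [e]
    gcongr
  have hcauchy : CauchySeq (u ∘ e) :=
    cauchySeq_of_norm_sub_sq_le (fun n => hbdd _ (he_pos n)) fun n m hnm =>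
      norm_sub_sq_le_of_apply_add_smul_eq hpos (he_pos m).le (he_anti hnm)
        ((hu _ (he_pos m)).trans (hu _ (he_pos n)).symm)
  obtain ⟨ustar, hlim⟩ := cauchySeq_tendsto_of_complete hcauchy
  exact ⟨ustar, hweak e he_pos tendsto_one_div_add_atTop_nhds_zero_nat ustar fun y =>
    hlim.inner tendsto_const_nhds⟩
end

section
/- Let P_{λ₀}, R₁₁ ∈ Sⁿ with R₁₁ + P_{λ₀} positive definite, and let L ∈ Sⁿ be positive semidefinite. Set K = R₁₁ + P_{λ₀}. Then 0 ⪯ (K + L)^{-1} ⪯ K^{-1} and for P = P_{λ₀} + L, the matrix M := P (R₁₁ + P)^{-2} P satisfies ⟨M x, x⟩ ≤ 4[1 + ‖K^{-1}‖²(‖K‖² + ‖P_{λ₀}‖²)]‖x‖² for all x ∈ ℝⁿ, where ‖·‖ denotes operator norm. -/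
/-!
Write `B = K + L = R₁₁ + P`. The identity `K⁻¹ - B⁻¹ = B⁻¹ (L + L K⁻¹ L) B⁻¹` gives
`0 ⪯ B⁻¹ ⪯ K⁻¹`, hence `‖B⁻¹‖ ≤ ‖K⁻¹‖`. Since `B⁻¹ P = 1 - B⁻¹ (K - P_{λ₀})`, its norm is at most
`1 + ‖K⁻¹‖ (‖K‖ + ‖P_{λ₀}‖)`, and likewise for `B⁻¹ Pᵀ`. As `M = (B⁻¹ Pᵀ)ᵀ (B⁻¹ P)`, Cauchy–Schwarz
bounds `⟪M x, x⟫` by the product of these two norms times `‖x‖²`, and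
`(1 + t)² ≤ 2 + 2 t²` with `t² ≤ 2 ‖K⁻¹‖² (‖K‖² + ‖P_{λ₀}‖²)` gives the constant `4`.
-/

open Matrix
open scoped RealInnerProductSpace

namespace ContinuousLinearMap

variable {𝕜 E : Type*} [RCLike 𝕜] [NormedAddCommGroup E] [InnerProductSpace 𝕜 E]

/-- For symmetric `T`, `‖T‖` is the supremum of `|rayleighQuotient T x|`, and `0 ≤ T ≤ S`
squeezes that quotient between `0` and the one of `S`. -/
theorem norm_le_norm_of_nonneg_of_le {T S : E →L[𝕜] E} (hT : 0 ≤ T) (hTS : T ≤ S) :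
    ‖T‖ ≤ ‖S‖ := by
  rw [nonneg_iff_isPositive] at hT
  rw [norm_eq_iSup_rayleighQuotient T hT.isSymmetric]
  refine ciSup_le fun x => ?_
  have h0 : 0 ≤ T.rayleighQuotient x := div_nonneg (hT.re_inner_nonneg_left x) (by positivity)
  have h1 : T.rayleighQuotient x ≤ S.rayleighQuotient x := by
    have : 0 ≤ (S - T).rayleighQuotient x :=
      div_nonneg (hTS.re_inner_nonneg_left x) (by positivity)
    rw [← add_sub_cancel T S, rayleighQuotient_add]
    linarith
  rw [abs_of_nonneg h0]
  exact h1.trans ((le_abs_self _).trans (S.rayleighQuotient_le_norm x))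

theorem norm_mul_sub_le_of_mul_eq_one {A B X : E →L[𝕜] E} (h : A * B = 1) :
    ‖A * (B - X)‖ ≤ 1 + ‖A‖ * ‖X‖ := by
  rw [mul_sub, h]
  exact (norm_sub_le _ _).trans (add_le_add norm_id_le (norm_mul_le _ _))

theorem real_inner_adjoint_mul_apply_le {F : Type*} [NormedAddCommGroup F] [InnerProductSpace ℝ F]
    [CompleteSpace F] (A C : F →L[ℝ] F) (x : F) :
    ⟪(adjoint A * C) x, x⟫ ≤ ‖A‖ * ‖C‖ * ‖x‖ ^ 2 := by
  rw [mul_apply_eq_comp, adjoint_inner_left]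
  calc ⟪C x, A x⟫ ≤ ‖C x‖ * ‖A x‖ := real_inner_le_norm _ _
    _ ≤ (‖C‖ * ‖x‖) * (‖A‖ * ‖x‖) := by gcongr <;> exact le_opNorm _ _
    _ = ‖A‖ * ‖C‖ * ‖x‖ ^ 2 := by ring

end ContinuousLinearMap

namespace Matrix

open scoped ComplexOrder

variable {𝕜 n : Type*} [RCLike 𝕜] [Fintype n] [DecidableEq n]

theorem PosSemidef.isPositive_toEuclideanCLM {A : Matrix n n 𝕜} (hA : A.PosSemidef) :
    (toEuclideanCLM (𝕜 := 𝕜) A).IsPositive := by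
  rw [← ContinuousLinearMap.isPositive_toLinearMap_iff,
    coe_toEuclideanCLM_eq_toEuclideanLin, isPositive_toEuclideanLin_iff]
  exact hA

theorem PosDef.posSemidef_inv_sub_inv_add {K L : Matrix n n 𝕜} (hK : K.PosDef)
    (hL : L.PosSemidef) : (K⁻¹ - (K + L)⁻¹).PosSemidef := by
  have hB := hK.add_posSemidef hL
  set B := K + L with hBdef
  have hKu : IsUnit K.det := (isUnit_iff_isUnit_det _).mp hK.isUnit
  have hBu : IsUnit B.det := (isUnit_iff_isUnit_det _).mp hB.isUnit
  have hX : (L + L * K⁻¹ * L).PosSemidef := by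
    simpa only [hL.isHermitian.eq] using hL.add (hK.inv.posSemidef.conjTranspose_mul_mul_same L)
  have hXB : L + L * K⁻¹ * L = B * K⁻¹ * B - B := by
    calc L + L * K⁻¹ * L = (K * K⁻¹) * K + L * (K⁻¹ * K) + (K * K⁻¹) * L + L * K⁻¹ * L - B := by
          rw [mul_nonsing_inv _ hKu, nonsing_inv_mul _ hKu, hBdef]; noncomm_ring
      _ = B * K⁻¹ * B - B := by rw [hBdef]; noncomm_ring
  have key : B⁻¹ * (L + L * K⁻¹ * L) * B⁻¹ = K⁻¹ - B⁻¹ := by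
    calc B⁻¹ * (L + L * K⁻¹ * L) * B⁻¹ = (B⁻¹ * B) * K⁻¹ * (B * B⁻¹) - (B⁻¹ * B) * B⁻¹ := by
          rw [hXB]; noncomm_ring
      _ = K⁻¹ - B⁻¹ := by
          rw [nonsing_inv_mul _ hBu, mul_nonsing_inv _ hBu, one_mul, one_mul, mul_one]
  simpa only [hB.inv.isHermitian.eq, key] using hX.conjTranspose_mul_mul_same B⁻¹

theorem PosDef.norm_toEuclideanCLM_inv_add_le {K L : Matrix n n 𝕜} (hK : K.PosDef)
    (hL : L.PosSemidef) :
    ‖toEuclideanCLM (𝕜 := 𝕜) (K + L)⁻¹‖ ≤ ‖toEuclideanCLM (𝕜 := 𝕜) K⁻¹‖ := by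
  refine ContinuousLinearMap.norm_le_norm_of_nonneg_of_le
    ((ContinuousLinearMap.nonneg_iff_isPositive _).mpr
      (hK.add_posSemidef hL).inv.posSemidef.isPositive_toEuclideanCLM)
    ((ContinuousLinearMap.le_def _ _).mpr ?_)
  rw [← map_sub]
  exact (hK.posSemidef_inv_sub_inv_add hL).isPositive_toEuclideanCLM

theorem norm_toEuclideanCLM_inv_mul_add_le {K L Q : Matrix n n 𝕜} (h : IsUnit (K + L).det) :
    ‖toEuclideanCLM (𝕜 := 𝕜) ((K + L)⁻¹ * (Q + L))‖ ≤
      1 + ‖toEuclideanCLM (𝕜 := 𝕜) (K + L)⁻¹‖ *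
        (‖toEuclideanCLM (𝕜 := 𝕜) K‖ + ‖toEuclideanCLM (𝕜 := 𝕜) Q‖) := by
  have hQL : Q + L = (K + L) - (K - Q) := by abel
  have hinv : toEuclideanCLM (𝕜 := 𝕜) (K + L)⁻¹ * toEuclideanCLM (𝕜 := 𝕜) (K + L) = 1 := by
    rw [← map_mul, nonsing_inv_mul _ h, map_one]
  rw [hQL, map_mul, map_sub]
  refine (ContinuousLinearMap.norm_mul_sub_le_of_mul_eq_one hinv).trans ?_
  rw [map_sub]
  gcongr
  exact norm_sub_le _ _

theorem inner_toEuclideanCLM_conjTranspose_mul_le (A C : Matrix n n ℝ)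
    (x : EuclideanSpace ℝ n) :
    ⟪toEuclideanCLM (𝕜 := ℝ) (Aᴴ * C) x, x⟫ ≤
      ‖toEuclideanCLM (𝕜 := ℝ) A‖ * ‖toEuclideanCLM (𝕜 := ℝ) C‖ * ‖x‖ ^ 2 := by
  rw [map_mul, ← star_eq_conjTranspose, map_star, ContinuousLinearMap.star_eq_adjoint]
  exact ContinuousLinearMap.real_inner_adjoint_mul_apply_le _ _ x

end Matrix

theorem stmt_15_general {n : ℕ} (P0 R11 L : Matrix (Fin n) (Fin n) ℝ)
    (hK : (R11 + P0).PosDef) (hL : L.PosSemidef) :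
    (((R11 + P0) + L)⁻¹).PosSemidef ∧
    ((R11 + P0)⁻¹ - ((R11 + P0) + L)⁻¹).PosSemidef ∧
    ∀ x : EuclideanSpace ℝ (Fin n),
      ⟪Matrix.toEuclideanCLM (𝕜 := ℝ)
          ((P0 + L) * ((R11 + (P0 + L))⁻¹ * (R11 + (P0 + L))⁻¹) * (P0 + L)) x, x⟫ ≤
        4 * (1 + ‖Matrix.toEuclideanCLM (𝕜 := ℝ) (R11 + P0)⁻¹‖ ^ 2 *
            (‖Matrix.toEuclideanCLM (𝕜 := ℝ) (R11 + P0)‖ ^ 2 +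
              ‖Matrix.toEuclideanCLM (𝕜 := ℝ) P0‖ ^ 2)) * ‖x‖ ^ 2 := by
  rw [← add_assoc]
  set K := R11 + P0
  have hB : (K + L).PosDef := hK.add_posSemidef hL
  refine ⟨hB.inv.posSemidef, hK.posSemidef_inv_sub_inv_add hL, fun x => ?_⟩
  set c := ‖toEuclideanCLM (𝕜 := ℝ) K⁻¹‖
  set a := ‖toEuclideanCLM (𝕜 := ℝ) K‖
  set b := ‖toEuclideanCLM (𝕜 := ℝ) P0‖
  have hM : (P0 + L) * ((K + L)⁻¹ * (K + L)⁻¹) * (P0 + L) =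
      ((K + L)⁻¹ * (P0ᴴ + L))ᴴ * ((K + L)⁻¹ * (P0 + L)) := by
    rw [conjTranspose_mul, conjTranspose_add, conjTranspose_conjTranspose, hL.isHermitian.eq,
      hB.inv.isHermitian.eq]
    noncomm_ring
  have hBu : IsUnit (K + L).det := (isUnit_iff_isUnit_det _).mp hB.isUnit
  have hc := hK.norm_toEuclideanCLM_inv_add_le hL
  have h₁ : ‖toEuclideanCLM (𝕜 := ℝ) ((K + L)⁻¹ * (P0 + L))‖ ≤ 1 + c * (a + b) :=
    (norm_toEuclideanCLM_inv_mul_add_le hBu).trans (by gcongr)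
  have h₂ : ‖toEuclideanCLM (𝕜 := ℝ) ((K + L)⁻¹ * (P0ᴴ + L))‖ ≤ 1 + c * (a + b) := by
    have hb : ‖toEuclideanCLM (𝕜 := ℝ) P0ᴴ‖ = b := by
      rw [← star_eq_conjTranspose, map_star, ContinuousLinearMap.star_eq_adjoint,
        LinearIsometryEquiv.norm_map]
    exact (norm_toEuclideanCLM_inv_mul_add_le hBu).trans (by rw [hb]; gcongr)
  calc _ ≤ ‖toEuclideanCLM (𝕜 := ℝ) ((K + L)⁻¹ * (P0ᴴ + L))‖ *
          ‖toEuclideanCLM (𝕜 := ℝ) ((K + L)⁻¹ * (P0 + L))‖ * ‖x‖ ^ 2 := by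
        rw [hM]; exact inner_toEuclideanCLM_conjTranspose_mul_le _ _ x
    _ ≤ (1 + c * (a + b)) * (1 + c * (a + b)) * ‖x‖ ^ 2 := by gcongr
    _ ≤ 4 * (1 + c ^ 2 * (a ^ 2 + b ^ 2)) * ‖x‖ ^ 2 := by
        gcongr ?_ * _
        nlinarith [sq_nonneg (c * (a + b) - 1), sq_nonneg (c * (a - b))]

theorem stmt_15 {n : ℕ} (P0 R11 L : Matrix (Fin n) (Fin n) ℝ)
    (hP0 : P0.IsSymm) (hR11 : R11.IsSymm)
    (hK : (R11 + P0).PosDef) (hL : L.PosSemidef) :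
    (((R11 + P0) + L)⁻¹).PosSemidef ∧
    ((R11 + P0)⁻¹ - ((R11 + P0) + L)⁻¹).PosSemidef ∧
    ∀ x : EuclideanSpace ℝ (Fin n),
      ⟪Matrix.toEuclideanCLM (𝕜 := ℝ)
          ((P0 + L) * ((R11 + (P0 + L))⁻¹ * (R11 + (P0 + L))⁻¹) * (P0 + L)) x, x⟫ ≤
        4 * (1 + ‖Matrix.toEuclideanCLM (𝕜 := ℝ) (R11 + P0)⁻¹‖ ^ 2 *
            (‖Matrix.toEuclideanCLM (𝕜 := ℝ) (R11 + P0)‖ ^ 2 +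
              ‖Matrix.toEuclideanCLM (𝕜 := ℝ) P0‖ ^ 2)) * ‖x‖ ^ 2 :=
  stmt_15_general P0 R11 L hK hL
end
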